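/- arXiv:2501.08451 — 4 statements merged into one kernel-verified Lean document; each statement's English description precedes it below -/
import Mathlib

section
/- Let n ≥ 2 and let s_1, …, s_n be integers such that s_i ≥ 0 for at least one index i ∈ {1, …, n}. Then there exist real numbers z_1, …, z_n, all strictly negative, such that every entry of the vector −Q(s_1,…,s_n)·z is strictly positive; explicitly, −s_1 z_1 − z_2 > 0, −s_j z_j − z_{j−1} − z_{j+1} > 0 for all 2 ≤ j ≤ n−1, and −s_n z_n − z_{n−1} > 0. -/
/-- For a linear plumbing `(s 1, …, s n)` with `n ≥ 2` and at least one
`s i ≥ 0`, there exist strictly negative reals `z 1, …, z n` such that every entry of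
`−Q(s 1,…,s n)·z` is strictly positive (the negative GS criterion of Li–Mak). -/
theorem negative_GS_criterion (n : ℕ) (hn : 2 ≤ n) (s : ℕ → ℤ)
    (hpos : ∃ i, 1 ≤ i ∧ i ≤ n ∧ 0 ≤ s i) :
    ∃ z : ℕ → ℝ,
      (∀ i, 1 ≤ i → i ≤ n → z i < 0) ∧
      0 < -(s 1 : ℝ) * z 1 - z 2 ∧
      (∀ j, 2 ≤ j → j ≤ n - 1 → 0 < -(s j : ℝ) * z j - z (j - 1) - z (j + 1)) ∧
      0 < -(s n : ℝ) * z n - z (n - 1) := by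
  obtain ⟨i0, hi1, hin, hs0⟩ := hpos
  set c : ℝ := (∑ j ∈ Finset.range (n + 1), |(s j : ℝ)|) + 1 with hcdef
  have hsum : 0 ≤ ∑ j ∈ Finset.range (n + 1), |(s j : ℝ)| :=
    Finset.sum_nonneg fun j _ => abs_nonneg _
  have hc0 : 0 < c := by simp only [hcdef]; linarith
  have hbound : ∀ j, j ≤ n → |(s j : ℝ)| < c := by
    intro j hj
    have h := Finset.single_le_sum (f := fun k => |(s k : ℝ)|)
      (fun k _ => abs_nonneg _) (Finset.mem_range.mpr (by omega : j < n + 1))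
    simp only [hcdef]; linarith
  have hr0 : 0 < c⁻¹ := inv_pos.mpr hc0
  have hpow : ∀ d : ℕ, 0 < c⁻¹ ^ d := fun d => pow_pos hr0 d
  have key : ∀ j, j ≤ n → ∀ d : ℕ, -(c⁻¹ ^ d) < (s j : ℝ) * c⁻¹ ^ (d + 1) := by
    intro j hj d
    have h1 : |(s j : ℝ)| * c⁻¹ ^ (d + 1) < c * c⁻¹ ^ (d + 1) :=
      mul_lt_mul_of_pos_right (hbound j hj) (hpow _)
    have h2 : c * c⁻¹ ^ (d + 1) = c⁻¹ ^ d := by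
      rw [pow_succ]; field_simp
    have h3 : -(|(s j : ℝ)| * c⁻¹ ^ (d + 1)) ≤ (s j : ℝ) * c⁻¹ ^ (d + 1) := by
      have h4 := neg_abs_le ((s j : ℝ))
      nlinarith [hpow (d + 1)]
    linarith
  have hdist : ∀ a b : ℕ, Nat.dist a b = a - b + (b - a) := fun a b => rfl
  refine ⟨fun j => -(c⁻¹ ^ (Nat.dist j i0)), ?_, ?_, ?_, ?_⟩
  · intro i _ _
    simp only [neg_lt_zero]
    exact hpow _
  · -- first row
    simp only []
    rcases eq_or_lt_of_le hi1 with h | h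
    · -- i0 = 1, s 1 ≥ 0
      have hs : (0 : ℝ) ≤ (s 1 : ℝ) := by rw [h]; exact_mod_cast hs0
      have hz1 : (0:ℝ) < c⁻¹ ^ (Nat.dist 1 i0) := hpow _
      have hz2 : (0:ℝ) < c⁻¹ ^ (Nat.dist 2 i0) := hpow _
      nlinarith
    · -- i0 ≥ 2
      have h1 : Nat.dist 1 i0 = (i0 - 2) + 1 := by rw [hdist]; omega
      have h2 : Nat.dist 2 i0 = i0 - 2 := by rw [hdist]; omega
      rw [h1, h2]
      have hk := key 1 (by omega) (i0 - 2)
      nlinarith [hpow (i0 - 2), hpow (i0 - 2 + 1)]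
  · -- interior rows
    intro j hj2 hjn
    simp only []
    have hjn' : j ≤ n := by omega
    rcases lt_trichotomy j i0 with h | h | h
    · have h1 : Nat.dist j i0 = (i0 - j - 1) + 1 := by rw [hdist]; omega
      have h2 : Nat.dist (j - 1) i0 = (i0 - j - 1) + 2 := by rw [hdist]; omega
      have h3 : Nat.dist (j + 1) i0 = i0 - j - 1 := by rw [hdist]; omega
      rw [h1, h2, h3]
      have hk := key j hjn' (i0 - j - 1)
      nlinarith [hpow (i0 - j - 1 + 2)]
    · have hs : (0 : ℝ) ≤ (s j : ℝ) := by rw [h]; exact_mod_cast hs0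
      have hz1 : (0:ℝ) < c⁻¹ ^ (Nat.dist j i0) := hpow _
      have hz2 : (0:ℝ) < c⁻¹ ^ (Nat.dist (j - 1) i0) := hpow _
      have hz3 : (0:ℝ) < c⁻¹ ^ (Nat.dist (j + 1) i0) := hpow _
      nlinarith
    · have h1 : Nat.dist j i0 = (j - i0 - 1) + 1 := by rw [hdist]; omega
      have h2 : Nat.dist (j - 1) i0 = j - i0 - 1 := by rw [hdist]; omega
      have h3 : Nat.dist (j + 1) i0 = (j - i0 - 1) + 2 := by rw [hdist]; omega
      rw [h1, h2, h3]
      have hk := key j hjn' (j - i0 - 1)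
      nlinarith [hpow (j - i0 - 1 + 2)]
  · -- last row
    simp only []
    rcases eq_or_lt_of_le hin with h | h
    · have hs : (0 : ℝ) ≤ (s n : ℝ) := by rw [← h]; exact_mod_cast hs0
      have hz1 : (0:ℝ) < c⁻¹ ^ (Nat.dist n i0) := hpow _
      have hz2 : (0:ℝ) < c⁻¹ ^ (Nat.dist (n - 1) i0) := hpow _
      nlinarith
    · have h1 : Nat.dist n i0 = (n - i0 - 1) + 1 := by rw [hdist]; omega
      have h2 : Nat.dist (n - 1) i0 = n - i0 - 1 := by rw [hdist]; omega
      rw [h1, h2]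
      have hk := key n le_rfl (n - i0 - 1)
      nlinarith [hpow (n - i0 - 1)]
end

section
/- Let n ≥ 2 and let s_1, …, s_n be integers. Let R_1 = (1, −s_1)ᵀ and R_2 = A(s_2)·A(s_3)⋯A(s_{n−1}) · (−s_n, 1)ᵀ (the product being the empty product, i.e. the identity, when n = 2). Then det Q(s_1,…,s_n) = (−1)^{n−1} · det(R_1, R_2). -/
/-- The matrix `A(s)` with rows `(−s, −1)` and `(1, 0)`. -/
def matA (s : ℤ) : Matrix (Fin 2) (Fin 2) ℤ := !![-s, -1; 1, 0]

/-- The tridiagonal intersection matrix `Q(s 0, …, s (n−1))` of a linear plumbing: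
diagonal entries `s i`, entries `1` on the super- and subdiagonal, `0` elsewhere. -/
def matQ (n : ℕ) (s : Fin n → ℤ) : Matrix (Fin n) (Fin n) ℤ :=
  Matrix.of fun i j =>
    if i = j then s i else if (i : ℕ) + 1 = (j : ℕ) ∨ (j : ℕ) + 1 = (i : ℕ) then 1 else 0

/-- Determinant of the 2×2 matrix with columns `u` and `v`. -/
def det2 (u v : Fin 2 → ℤ) : ℤ := u 0 * v 1 - u 1 * v 0

lemma matQ_det_rec (k : ℕ) (t : ℕ → ℤ) :
    (matQ (k+2) fun i => t i).det =
      t 0 * (matQ (k+1) fun i => t ((i:ℕ)+1)).det - (matQ k fun i => t ((i:ℕ)+2)).det := by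
  rw [Matrix.det_succ_row_zero]
  rw [Fin.sum_univ_succ, Fin.sum_univ_succ]
  rw [Finset.sum_eq_zero (fun (j : Fin k) _ => by
    have hz : (matQ (k+2) fun i => t i) 0 j.succ.succ = 0 := by
      simp only [matQ, Matrix.of_apply, Fin.val_succ, Fin.val_zero]
      rw [if_neg (by simp [Fin.ext_iff])]; exact if_neg (by omega)
    rw [hz]; ring)]
  have h00 : (matQ (k+2) fun i => t i) 0 0 = t 0 := by simp [matQ]
  have h01 : (matQ (k+2) fun i => t i) 0 (Fin.succ 0) = 1 := by
    simp only [matQ, Matrix.of_apply, Fin.val_succ, Fin.val_zero]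
    rw [if_neg (by simp [Fin.ext_iff]), if_pos (by tauto)]
  have hsub0 : (matQ (k+2) fun i => t i).submatrix Fin.succ ((0 : Fin (k+2)).succAbove)
      = matQ (k+1) fun i => t ((i:ℕ)+1) := by
    ext i j
    simp only [Matrix.submatrix_apply, Fin.succAbove_zero, matQ, Matrix.of_apply, Fin.succ_inj]
    rcases eq_or_ne i j with h | h
    · simp [h]
    · rw [if_neg h, if_neg h]
      refine if_congr ?_ rfl rfl
      simp only [Fin.val_succ]; omega
  have hsub1 : ((matQ (k+2) fun i => t i).submatrix Fin.succ ((Fin.succ 0 : Fin (k+2)).succAbove)).det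
      = (matQ k fun i => t ((i:ℕ)+2)).det := by
    rw [Matrix.det_succ_column_zero, Fin.sum_univ_succ]
    have hN00 : ((matQ (k+2) fun i => t i).submatrix Fin.succ
        ((Fin.succ 0 : Fin (k+2)).succAbove)) 0 0 = 1 := by
      simp only [Matrix.submatrix_apply, Fin.succ_zero_eq_one, Fin.one_succAbove_zero,
        matQ, Matrix.of_apply, Fin.val_succ, Fin.val_zero, Fin.val_one]
      rw [if_neg (by simp [Fin.ext_iff]), if_pos (by tauto)]
    rw [hN00]
    rw [Finset.sum_eq_zero (fun (i : Fin k) _ => by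
      have hz : ((matQ (k+2) fun i => t i).submatrix Fin.succ
          ((Fin.succ 0 : Fin (k+2)).succAbove)) i.succ 0 = 0 := by
        simp only [Matrix.submatrix_apply, Fin.succ_zero_eq_one, Fin.one_succAbove_zero,
          matQ, Matrix.of_apply, Fin.val_succ, Fin.val_zero, Fin.val_one]
        rw [if_neg (by simp [Fin.ext_iff])]; exact if_neg (by omega)
      rw [hz]; ring)]
    have hsub : (((matQ (k+2) fun i => t i).submatrix Fin.succ
        ((Fin.succ 0 : Fin (k+2)).succAbove)).submatrix ((0 : Fin (k+1)).succAbove) Fin.succ)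
        = matQ k fun i => t ((i:ℕ)+2) := by
      ext i j
      simp only [Matrix.submatrix_apply, Fin.succAbove_zero, Fin.succ_zero_eq_one,
        Fin.one_succAbove_succ, matQ, Matrix.of_apply, Fin.succ_inj]
      rcases eq_or_ne i j with h | h
      · simp [h]
      · rw [if_neg h, if_neg h]
        refine if_congr ?_ rfl rfl
        simp only [Fin.val_succ]; omega
    rw [hsub]
    simp
  rw [h00, h01, hsub0, hsub1]
  simp; ring

lemma prod_mulVec_succ (m : ℕ) (f : ℕ → ℤ) (v : Fin 2 → ℤ) :
    (((List.range (m+1)).map fun j => matA (f j)).prod).mulVec v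
      = (matA (f 0)).mulVec ((((List.range m).map fun j => matA (f (j+1))).prod).mulVec v) := by
  rw [List.range_succ_eq_map]
  simp only [List.map_cons, List.prod_cons, List.map_map, Matrix.mulVec_mulVec, Function.comp_def, Nat.succ_eq_add_one]

lemma key_identity (a b c : ℤ) (kk : ℕ) (x : Fin 2 → ℤ) :
    a * ((-1:ℤ)^(kk+2) * det2 ![1, -b] ((matA c).mulVec x)) - (-1:ℤ)^(kk+1) * det2 ![1, -c] x
      = (-1:ℤ)^(kk+3) * det2 ![1, -a] ((matA b).mulVec ((matA c).mulVec x)) := by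
  simp [det2, matA, Matrix.mulVec, dotProduct, Fin.sum_univ_two, pow_succ, Matrix.vecHead, Matrix.vecTail]
  ring

lemma aux_det (k : ℕ) : ∀ s : ℕ → ℤ,
    (matQ (k+2) fun i => s ((i:ℕ)+1)).det =
      (-1:ℤ)^(k+1) * det2 ![1, -(s 1)]
        ((((List.range k).map fun j => matA (s (j+2))).prod).mulVec ![-(s (k+2)), 1]) := by
  induction k using Nat.twoStepInduction with
  | zero =>
    intro s
    simp [matQ, det2, Matrix.det_fin_two, Matrix.one_mulVec]
  | one =>
    intro s
    have h3 : (matQ 3 fun i => s ((i:ℕ)+1)) = !![s 1, 1, 0; 1, s 2, 1; 0, 1, s 3] := by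
      ext i j
      fin_cases i <;> fin_cases j <;> simp [matQ]
    rw [h3, Matrix.det_fin_three]
    simp [det2, matA, Matrix.mulVec, dotProduct, Fin.sum_univ_two,
      List.range_succ, List.range_zero]
    ring
  | more k IH1 IH2 =>
    intro s
    have e0 : (matQ (k+2+2) fun i => s ((i:ℕ)+1)).det
        = s 1 * (matQ (k+3) fun i => s ((i:ℕ)+2)).det - (matQ (k+2) fun i => s ((i:ℕ)+3)).det :=
      matQ_det_rec (k+2) (fun i => s (i+1))
    have e1 : (matQ (k+2) fun i => s ((i:ℕ)+3)).det
        = (-1:ℤ)^(k+1) * det2 ![1, -(s 3)]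
          ((((List.range k).map fun j => matA (s (j+4))).prod).mulVec ![-(s (k+4)), 1]) :=
      IH1 (fun i => s (i+2))
    have e2 : (matQ (k+3) fun i => s ((i:ℕ)+2)).det
        = (-1:ℤ)^(k+2) * det2 ![1, -(s 2)]
          ((((List.range (k+1)).map fun j => matA (s (j+3))).prod).mulVec ![-(s (k+4)), 1]) :=
      IH2 (fun i => s (i+1))
    have hp2 : (((List.range (k+1)).map fun j => matA (s (j+3))).prod).mulVec ![-(s (k+4)), 1]
        = (matA (s 3)).mulVec
            ((((List.range k).map fun j => matA (s (j+4))).prod).mulVec ![-(s (k+4)), 1]) :=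
      prod_mulVec_succ k (fun j => s (j+3)) ![-(s (k+4)), 1]
    have hp1 : (((List.range (k+2)).map fun j => matA (s (j+2))).prod).mulVec ![-(s (k+2+2)), 1]
        = (matA (s 2)).mulVec
            ((((List.range (k+1)).map fun j => matA (s (j+3))).prod).mulVec ![-(s (k+4)), 1]) :=
      prod_mulVec_succ (k+1) (fun j => s (j+2)) ![-(s (k+4)), 1]
    rw [hp2] at e2
    rw [e0, e1, e2, hp1, hp2]
    exact key_identity (s 1) (s 2) (s 3) k _

/-- with `R₁ = (1, −s 1)ᵀ` and `R₂ = A(s 2)⋯A(s (n−1))·(−s n, 1)ᵀ`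
(the rays bounding the moment cone of the concave boundary of the linear plumbing),
`det Q(s 1,…,s n) = (−1)^(n−1) · det(R₁, R₂)`. -/
theorem det_Q_eq_det_rays (n : ℕ) (hn : 2 ≤ n) (s : ℕ → ℤ) :
    let R₁ : Fin 2 → ℤ := ![1, -(s 1)]
    let R₂ : Fin 2 → ℤ :=
      (((List.range (n - 2)).map fun j => matA (s (j + 2))).prod).mulVec ![-(s n), 1]
    (matQ n fun i => s ((i : ℕ) + 1)).det = (-1) ^ (n - 1) * det2 R₁ R₂ := by
  obtain ⟨k, rfl⟩ : ∃ k, n = k + 2 := ⟨n - 2, by omega⟩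
  exact aux_det k s
end

section
/- Let n ≥ 2 and let s_1, …, s_n be integers such that for some index i ∈ {1,…,n} one has s_i ≥ 0 and s_j ≤ −2 for all j ≠ i. Define (x_{n−1}, y_{n−1}) = (−s_n, 1) and, recursively for j = n−2 down to 1, (x_j, y_j) = (−s_{j+1} x_{j+1} − y_{j+1}, x_{j+1}) (equivalently, (x_1, y_1)ᵀ = A(s_2)⋯A(s_{n−1})·(−s_n,1)ᵀ). Then det( (1, −s_1)ᵀ, (x_1, y_1)ᵀ ) = y_1 + s_1 x_1 > 0; that is, the two rays R_1 = (1,−s_1) and R_2 = (x_1,y_1) of the moment cone of the linear plumbing (s_1,…,s_n) span a strictly convex cone. -/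
/-- Backward recursion: `fr u m = A(u (m-1)) ⋯ A(u 0) · (1,0)ᵀ` as a pair. -/
def fr (u : ℕ → ℤ) : ℕ → ℤ × ℤ
  | 0 => (1, 0)
  | m + 1 => (-(u m) * (fr u m).1 - (fr u m).2, (fr u m).1)

lemma matA_mulVec (a : ℤ) (x : Fin 2 → ℤ) :
    (matA a).mulVec x = ![-a * x 0 - x 1, x 0] := by
  funext i
  fin_cases i <;>
    simp [matA, Matrix.mulVec, dotProduct, Fin.sum_univ_two] <;> ring

lemma fr_eq_prod (u : ℕ → ℤ) :
    ∀ m, ![(fr u m).1, (fr u m).2] =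
      (((List.range m).map (fun j => matA (u (m - 1 - j)))).prod).mulVec ![1, 0]
  | 0 => by
      funext i
      fin_cases i <;> simp [fr, Matrix.mulVec, dotProduct, Fin.sum_univ_two]
  | (m + 1) => by
      rw [List.range_succ_eq_map]
      simp only [List.map_cons, List.map_map, List.prod_cons]
      have h1 : (List.range m).map ((fun j => matA (u (m + 1 - 1 - j))) ∘ Nat.succ)
          = (List.range m).map (fun j => matA (u (m - 1 - j))) := by
        apply List.map_congr_left
        intro a _
        simp only [Function.comp]
        have h2 : m + 1 - 1 - Nat.succ a = m - 1 - a := by omega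
        rw [h2]
      rw [h1, ← Matrix.mulVec_mulVec, ← fr_eq_prod u m]
      have h0 : m + 1 - 1 - 0 = m := by omega
      rw [h0, matA_mulVec]
      simp [fr]

lemma frA (u : ℕ → ℤ) (M : ℕ) (h : ∀ m < M, u m ≤ -2) :
    ∀ m ≤ M, (fr u m).2 + 1 ≤ (fr u m).1 ∧ 0 ≤ (fr u m).2 := by
  intro m
  induction m with
  | zero => intro _; simp [fr]
  | succ m ih =>
    intro hm
    obtain ⟨h1, h2⟩ := ih (by omega)
    have hu := h m (by omega)
    simp only [fr]
    constructor
    · nlinarith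
    · linarith

lemma frC (u : ℕ → ℤ) (M N : ℕ) (hM : 0 ≤ u M)
    (hpM : (fr u M).2 + 1 ≤ (fr u M).1) (hqM : 0 ≤ (fr u M).2)
    (hB : ∀ m, M < m → m < N → u m ≤ -2) :
    ∀ m, M < m → m ≤ N →
      (fr u m).1 + (fr u M).2 ≤ (M : ℤ) + 1 - m ∧ (fr u m).1 + 1 ≤ (fr u m).2 := by
  intro m
  induction m with
  | zero => omega
  | succ m ih =>
    intro h1 h2
    rcases Nat.lt_or_ge M m with hMm | hMm
    · obtain ⟨ih1, ih2⟩ := ih hMm (by omega)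
      have hu := hB m hMm (by omega)
      have hcast : (M : ℤ) + 1 ≤ (m : ℤ) := by exact_mod_cast hMm
      have hp0 : (fr u m).1 ≤ 0 := by linarith
      have key : -(u m) * (fr u m).1 ≤ 2 * (fr u m).1 := by nlinarith
      simp only [fr]
      push_cast
      constructor
      · linarith
      · linarith
    · have hMm' : M = m := by omega
      subst hMm'
      simp only [fr]
      push_cast
      constructor
      · nlinarith
      · nlinarith

/-- if `s i ≥ 0` for some `i` and `s j ≤ −2` for all `j ≠ i`, then with
`(x₁, y₁)ᵀ = A(s 2)⋯A(s (n−1))·(−s n, 1)ᵀ`, the rays `R₁ = (1, −s 1)` and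
`R₂ = (x₁, y₁)` of the moment cone satisfy `det(R₁, R₂) = y₁ + s 1 · x₁ > 0`,
i.e. they span a strictly convex cone. -/
theorem moment_cone_strictly_convex (n : ℕ) (hn : 2 ≤ n) (s : ℕ → ℤ)
    (i : ℕ) (hi1 : 1 ≤ i) (hin : i ≤ n) (hsi : 0 ≤ s i)
    (hneg : ∀ j, 1 ≤ j → j ≤ n → j ≠ i → s j ≤ -2) :
    let v : Fin 2 → ℤ :=
      (((List.range (n - 2)).map fun j => matA (s (j + 2))).prod).mulVec ![-(s n), 1]
    det2 ![1, -(s 1)] v = v 1 + s 1 * v 0 ∧ 0 < v 1 + s 1 * v 0 := by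
  intro v
  set u : ℕ → ℤ := fun j => s (n - j) with hu
  -- invariants
  have hA := frA u (n - i) (fun m hm => by
    show s (n - m) ≤ -2
    exact hneg (n - m) (by omega) (by omega) (by omega))
  have hpq := hA (n - i) le_rfl
  have hsi' : 0 ≤ u (n - i) := by
    show 0 ≤ s (n - (n - i))
    have : n - (n - i) = i := by omega
    rw [this]; exact hsi
  have hC := frC u (n - i) n hsi' hpq.1 hpq.2 (fun m h1 h2 => by
    show s (n - m) ≤ -2
    exact hneg (n - m) (by omega) (by omega) (by omega))
  have hfinal := hC n (by omega) le_rfl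
  -- lower bound on q at the pivot when i < n
  have hq1 : i < n → 1 ≤ (fr u (n - i)).2 := by
    intro hiln
    obtain ⟨k, hk⟩ : ∃ k, n - i = k + 1 := ⟨n - i - 1, by omega⟩
    have := hA k (by omega)
    rw [hk]
    simp only [fr]
    linarith [this.1, this.2]
  have hcast : ((n - i : ℕ) : ℤ) = (n : ℤ) - (i : ℤ) := by
    have : (i : ℤ) ≤ (n : ℤ) := by exact_mod_cast hin
    omega
  have hpn : (fr u n).1 ≤ -1 := by
    rcases Nat.lt_or_ge i n with hlt | hge
    · have := hq1 hlt
      have hi1' : (1 : ℤ) ≤ (i : ℤ) := by exact_mod_cast hi1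
      linarith [hfinal.1, hcast ▸ hfinal.1]
    · have hieq : i = n := by omega
      have hM0 : n - i = 0 := by omega
      have hq0 : (fr u (n - i)).2 = 0 := by rw [hM0]; simp [fr]
      have hn' : (2 : ℤ) ≤ (n : ℤ) := by exact_mod_cast hn
      have := hfinal.1
      rw [hq0, hcast, hieq] at this
      linarith
  -- identify v with fr u (n-1)
  have hv : ![(fr u (n - 1)).1, (fr u (n - 1)).2] = v := by
    rw [fr_eq_prod u (n - 1)]
    show _ = (((List.range (n - 2)).map fun j => matA (s (j + 2))).prod).mulVec ![-(s n), 1]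
    obtain ⟨k, hk⟩ : ∃ k, n - 1 = k + 1 := ⟨n - 2, by omega⟩
    have hk2 : n - 2 = k := by omega
    rw [hk, hk2, List.range_succ, List.map_append, List.prod_append]
    simp only [List.map_cons, List.map_nil, List.prod_cons, List.prod_nil, mul_one]
    rw [← Matrix.mulVec_mulVec]
    have hmap : (List.range k).map (fun j => matA (u (k + 1 - 1 - j)))
        = (List.range k).map (fun j => matA (s (j + 2))) := by
      apply List.map_congr_left
      intro a ha
      rw [List.mem_range] at ha
      show matA (s (n - (k + 1 - 1 - a))) = matA (s (a + 2))
      have h3 : n - (k + 1 - 1 - a) = a + 2 := by omega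
      rw [h3]
    rw [hmap]
    congr 1
    have h0 : k + 1 - 1 - k = 0 := by omega
    rw [h0, matA_mulVec]
    funext j
    fin_cases j <;> simp [hu]
  -- compute the target quantities
  have hv0 : v 0 = (fr u (n - 1)).1 := by rw [← hv]; rfl
  have hv1 : v 1 = (fr u (n - 1)).2 := by rw [← hv]; rfl
  obtain ⟨m, hm⟩ : ∃ m, n = m + 1 := ⟨n - 1, by omega⟩
  have hfrn : (fr u n).1 = -(u m) * (fr u m).1 - (fr u m).2 := by
    rw [hm]; rfl
  have hum : u m = s 1 := by
    show s (n - m) = s 1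
    congr 1
    omega
  have hm' : n - 1 = m := by omega
  rw [hm'] at hv0 hv1
  constructor
  · simp only [det2, hv0, hv1]
    simp [Matrix.cons_val_zero, Matrix.cons_val_one]
  · rw [hv0, hv1]
    rw [hum] at hfrn
    linarith
end

section
/- For every integer k and every integer n ≥ 2, the following 2×2 integer matrix identity holds: [(k, −1), (1, 0)] · [(0, −1), (1, 0)] · [(1−k, −1), (1, 0)] · [(2, −1), (1, 0)]^{n−2} · (2, 1)ᵀ = (−1, −n)ᵀ, where [(a,b),(c,d)] denotes the 2×2 matrix with first row (a,b) and second row (c,d). -/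
lemma pow_two_mat (m : ℕ) :
    (!![2, -1; 1, 0] : Matrix (Fin 2) (Fin 2) ℤ) ^ m =
      !![(m : ℤ) + 1, -(m : ℤ); (m : ℤ), 1 - (m : ℤ)] := by
  induction m with
  | zero => simp [Matrix.one_fin_two]
  | succ m ih =>
    rw [pow_succ, ih]
    push_cast
    rw [Matrix.mul_fin_two]
    congr 1 <;> ring

/-- for every integer `k` and every `n ≥ 2`,
`[(k,−1),(1,0)] · [(0,−1),(1,0)] · [(1−k,−1),(1,0)] · [(2,−1),(1,0)]^(n−2) · (2,1)ᵀ
= (−1, −n)ᵀ`; this computes the second moment-cone ray of the linear plumbing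
`(−n, −k, 0, k−1, −2, …, −2)` with `n−1` copies of `−2`. -/
theorem half_plane_moment_cone (k : ℤ) (n : ℕ) (hn : 2 ≤ n) :
    ((!![k, -1; 1, 0] : Matrix (Fin 2) (Fin 2) ℤ) * !![0, -1; 1, 0] *
        !![1 - k, -1; 1, 0] * (!![2, -1; 1, 0]) ^ (n - 2)).mulVec ![2, 1] =
      ![-1, -(n : ℤ)] := by
  obtain ⟨m, rfl⟩ := Nat.exists_eq_add_of_le hn
  rw [Nat.add_sub_cancel_left, pow_two_mat]
  push_cast
  ext i
  fin_cases i <;>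
    simp [Matrix.mul_fin_two, Matrix.mulVec, Matrix.vecHead, Matrix.vecTail,
      dotProduct] <;> ring
end
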